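/- Let n ≥ 1 and let A be a real n×n matrix such that every complex eigenvalue λ of A satisfies Re λ < 0. Then A is invertible, the function τ ↦ exp(τ*A) is integrable on [0, ∞) (entrywise, equivalently in operator norm), and ∫₀^∞ exp(τ*A) dτ = −A⁻¹. -/

import Mathlib

/-!
The eigenvalues of `exp A` are the numbers `e^λ` with `λ` an eigenvalue of `A`, so they lie in the
open unit disc, and Gelfand's formula gives `‖exp A ^ k‖ ≤ r ^ k` for some `r < 1` and all large
`k`. Splitting `t = ⌊t⌋ + (t - ⌊t⌋)` turns this into exponential decay of `exp (t • A)`. As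
`t ↦ exp (t • A) * A⁻¹` is a primitive of `exp (t • A)` that tends to `0` at infinity, the
integral over `(0, ∞)` is `-A⁻¹`.
-/

open MeasureTheory NormedSpace Set Filter Topology Asymptotics
open scoped NNReal

theorem isBigO_exp_smul_of_eventually_norm_pow_le {𝕂 𝔸 : Type*} [RCLike 𝕂] [NormedRing 𝔸]
    [NormedAlgebra 𝕂 𝔸] [CompleteSpace 𝔸] (a : 𝔸) {r : ℝ} (hr0 : 0 < r) (hr1 : r ≤ 1)
    (h : ∀ᶠ k : ℕ in atTop, ‖exp a ^ k‖ ≤ r ^ k) :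
    (fun t : ℝ => exp ((t : 𝕂) • a)) =O[atTop] fun t => r ^ t := by
  let +nondep : NormedAlgebra ℚ 𝔸 := .restrictScalars ℚ 𝕂 𝔸
  have hcont : Continuous fun s : ℝ => exp ((s : 𝕂) • a) :=
    exp_continuous.comp (RCLike.continuous_ofReal.smul continuous_const)
  obtain ⟨K, hK⟩ := (isCompact_Icc (a := (0 : ℝ)) (b := 1)).exists_bound_of_continuousOn
    hcont.continuousOn
  obtain ⟨N, hN⟩ := eventually_atTop.1 h
  refine IsBigO.of_bound (K / r) ?_
  filter_upwards [tendsto_nat_floor_atTop.eventually_ge_atTop N, eventually_ge_atTop 0]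
    with t hNt ht0
  set k := ⌊t⌋₊
  have hkt : (k : ℝ) ≤ t := Nat.floor_le ht0
  have hsplit : exp ((t : 𝕂) • a) = exp (((t - k : ℝ) : 𝕂) • a) * exp a ^ k := by
    rw [← exp_nsmul, ← exp_add_of_commute ((Commute.refl a).smul_left _ |>.smul_right _)]
    congr 1
    rw [← Nat.cast_smul_eq_nsmul 𝕂, ← add_smul]
    push_cast; ring_nf
  have hfrac : ‖exp (((t - k : ℝ) : 𝕂) • a)‖ ≤ K :=
    hK _ ⟨by linarith, by linarith [Nat.lt_floor_add_one t]⟩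
  have hpow : r ^ k ≤ r ^ t / r := by
    rw [← Real.rpow_natCast, ← Real.rpow_sub_one hr0.ne']
    exact Real.rpow_le_rpow_of_exponent_ge hr0 hr1 (by linarith [Nat.lt_floor_add_one t])
  calc ‖exp ((t : 𝕂) • a)‖ ≤ K * r ^ k := by
        rw [hsplit]
        exact (norm_mul_le _ _).trans (mul_le_mul hfrac (hN k hNt) (norm_nonneg _)
          ((norm_nonneg _).trans hfrac))
    _ ≤ K * (r ^ t / r) := mul_le_mul_of_nonneg_left hpow ((norm_nonneg _).trans hfrac)
    _ = K / r * ‖r ^ t‖ := by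
        rw [Real.norm_of_nonneg (Real.rpow_nonneg hr0.le t)]; ring

section ComplexBanachAlgebra

variable {A : Type*} [NormedRing A] [NormedAlgebra ℂ A] [CompleteSpace A]

/- Characters of the closed subalgebra generated by `a` commute with `exp`; as `(spectrum ℂ a)ᶜ` is
connected, passing to that subalgebra does not enlarge the spectrum of `a`. -/
theorem spectrum_exp_subset_of_countable (a : A) (h : (spectrum ℂ a).Countable) :
    spectrum ℂ (exp a) ⊆ exp '' spectrum ℂ a := by
  let : NormedCommRing (Algebra.elemental ℂ a) :=
    { SubringClass.toNormedRing (Algebra.elemental ℂ a) with mul_comm := mul_comm }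
  let +nondep : NormedAlgebra ℚ A := .restrictScalars ℚ ℂ A
  let +nondep : NormedAlgebra ℚ (Algebra.elemental ℂ a) := .restrictScalars ℚ ℂ _
  set b : Algebra.elemental ℂ a := ⟨a, Algebra.elemental.self_mem ℂ a⟩
  intro z hz
  have hexp : ((exp b : Algebra.elemental ℂ a) : A) = exp a :=
    map_exp (Algebra.elemental ℂ a).val continuous_subtype_val b
  rw [← hexp] at hz
  obtain ⟨φ, rfl⟩ := WeakDual.CharacterSpace.mem_spectrum_iff_exists.mp
    (spectrum.subset_subalgebra _ hz)
  refine ⟨φ b, ?_, (map_exp φ φ.1.cont b).symm⟩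
  rw [← Subalgebra.spectrum_eq_of_isPreconnected_compl _ b
    (h.isConnected_compl_of_one_lt_rank (by simp)).isPreconnected]
  exact AlgHom.apply_mem_spectrum φ b

theorem spectralRadius_exp_lt_one_of_re_neg (a : A) (hcount : (spectrum ℂ a).Countable)
    (hre : ∀ z ∈ spectrum ℂ a, z.re < 0) : spectralRadius ℂ (exp a) < 1 := by
  rcases (spectrum ℂ (exp a)).eq_empty_or_nonempty with hempty | hne
  · simp [spectralRadius, hempty]
  refine spectrum.spectralRadius_lt_of_forall_lt_of_nonempty hne fun μ hμ => ?_
  obtain ⟨z, hz, rfl⟩ := spectrum_exp_subset_of_countable a hcount hμ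
  rw [← NNReal.coe_lt_coe, coe_nnnorm, ← Complex.exp_eq_exp_ℂ, Complex.norm_exp]
  simpa using hre z hz

theorem eventually_norm_pow_le_of_spectralRadius_lt (a : A) {r : ℝ≥0}
    (h : spectralRadius ℂ a < r) : ∀ᶠ k : ℕ in atTop, ‖a ^ k‖ ≤ r ^ k := by
  filter_upwards [(spectrum.pow_nnnorm_pow_one_div_tendsto_nhds_spectralRadius a).eventually
    (gt_mem_nhds h), eventually_ge_atTop 1] with k hk hk1
  have hk0 : (0 : ℝ) < k := by exact_mod_cast hk1
  rw [one_div, ENNReal.rpow_inv_lt_iff hk0, ENNReal.rpow_natCast] at hk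
  exact_mod_cast hk.le

theorem exists_isBigO_exp_ofReal_smul_of_re_neg (a : A) (hcount : (spectrum ℂ a).Countable)
    (hre : ∀ z ∈ spectrum ℂ a, z.re < 0) :
    ∃ δ > 0, (fun t : ℝ => exp ((t : ℂ) • a)) =O[atTop] fun t => Real.exp (-δ * t) := by
  obtain ⟨r, hρr, hr⟩ :=
    ENNReal.lt_iff_exists_nnreal_btwn.1 (spectralRadius_exp_lt_one_of_re_neg a hcount hre)
  have hr0 : (0 : ℝ) < r := by exact_mod_cast ENNReal.coe_pos.1 (pos_of_gt hρr)
  have hr1 : (r : ℝ) < 1 := by exact_mod_cast hr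
  refine ⟨-Real.log r, neg_pos.2 (Real.log_neg hr0 hr1), ?_⟩
  refine (isBigO_exp_smul_of_eventually_norm_pow_le a hr0 hr1.le
    (by exact_mod_cast eventually_norm_pow_le_of_spectralRadius_lt (exp a) hρr)).congr_right
    fun t => ?_
  rw [Real.rpow_def_of_pos hr0, neg_neg, mul_comm]

end ComplexBanachAlgebra

section RealBanachAlgebra

variable {𝔸 : Type*} [NormedRing 𝔸] [NormedAlgebra ℝ 𝔸] [CompleteSpace 𝔸] {a : 𝔸} {δ : ℝ}

theorem integrableOn_Ici_exp_smul_of_isBigO (hδ : 0 < δ)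
    (hdecay : (fun t : ℝ => exp (t • a)) =O[atTop] fun t => Real.exp (-δ * t)) :
    IntegrableOn (fun t : ℝ => exp (t • a)) (Ici 0) :=
  (continuous_iff_continuousAt.2 fun t => (hasDerivAt_exp_smul_const a t).continuousAt)
    |>.continuousOn.locallyIntegrableOn measurableSet_Ici |>.integrableOn_of_isBigO_atTop hdecay
    ⟨Ioi 0, Ioi_mem_atTop 0, exp_neg_integrableOn_Ioi 0 hδ⟩

theorem integral_Ioi_exp_smul_of_isBigO {b : 𝔸} (hab : a * b = 1) (hδ : 0 < δ)
    (hdecay : (fun t : ℝ => exp (t • a)) =O[atTop] fun t => Real.exp (-δ * t)) :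
    ∫ t in Ioi (0 : ℝ), exp (t • a) = -b := by
  have hderiv : ∀ t ∈ Ici (0 : ℝ), HasDerivAt (fun s : ℝ => exp (s • a) * b) (exp (t • a)) t :=
    fun t _ => by simpa [mul_assoc, hab] using (hasDerivAt_exp_smul_const a t).mul_const b
  have hlim : Tendsto (fun t : ℝ => exp (t • a) * b) atTop (𝓝 0) := by
    have hexp : Tendsto (fun t : ℝ => Real.exp (-δ * t)) atTop (𝓝 0) :=
      Real.tendsto_exp_atBot.comp (tendsto_id.const_mul_atTop_of_neg (neg_lt_zero.2 hδ))
    simpa using (hdecay.trans_tendsto hexp).mul_const b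
  rw [integral_Ioi_of_hasDerivAt_of_tendsto' hderiv
    ((integrableOn_Ici_exp_smul_of_isBigO hδ hdecay).mono_set Ioi_subset_Ici_self) hlim]
  simp

end RealBanachAlgebra

namespace Matrix

section LinftyOp

-- `exp` only sees the topology of `Matrix n n ℝ`; this norm just serves the estimates.
attribute [local instance] Matrix.linftyOpNormedRing Matrix.linftyOpNormedAlgebra

variable {n : Type*} [Fintype n] [DecidableEq n]

theorem linfty_opNorm_map_algebraMap (M : Matrix n n ℝ) :
    ‖M.map (algebraMap ℝ ℂ)‖ = ‖M‖ := by
  simp [linfty_opNorm_def]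

theorem exp_smul_map_algebraMap (A : Matrix n n ℝ) (t : ℝ) :
    (exp (t • A)).map (algebraMap ℝ ℂ) = exp ((t : ℂ) • A.map (algebraMap ℝ ℂ)) := by
  have hmap : (exp (t • A)).map (algebraMap ℝ ℂ) = exp ((t • A).map (algebraMap ℝ ℂ)) :=
    map_exp (algebraMap ℝ ℂ).mapMatrix (continuous_id.matrix_map (continuous_algebraMap ℝ ℂ)) _
  rw [hmap]
  congr 1
  ext
  simp

theorem exists_isBigO_exp_smul_of_re_neg (A : Matrix n n ℝ)
    (hspec : ∀ μ ∈ spectrum ℂ (A.map (algebraMap ℝ ℂ)), μ.re < 0) :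
    ∃ δ > 0, (fun t : ℝ => exp (t • A)) =O[atTop] fun t => Real.exp (-δ * t) := by
  have hcount : (spectrum ℂ (A.map (algebraMap ℝ ℂ))).Countable :=
    (Matrix.finite_spectrum _).countable
  obtain ⟨δ, hδ, hdecay⟩ :=
    exists_isBigO_exp_ofReal_smul_of_re_neg (A.map (algebraMap ℝ ℂ)) hcount hspec
  have hnorm : (fun t : ℝ => ‖exp ((t : ℂ) • A.map (algebraMap ℝ ℂ))‖) =
      fun t : ℝ => ‖exp (t • A)‖ :=
    funext fun t => by rw [← exp_smul_map_algebraMap, linfty_opNorm_map_algebraMap]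
  exact ⟨δ, hδ, isBigO_norm_left.1 (hnorm ▸ isBigO_norm_left.2 hdecay)⟩

theorem integrableOn_exp_smul_apply (A : Matrix n n ℝ)
    (hspec : ∀ μ ∈ spectrum ℂ (A.map (algebraMap ℝ ℂ)), μ.re < 0) (i j : n) :
    IntegrableOn (fun t : ℝ => exp (t • A) i j) (Ici 0) := by
  obtain ⟨δ, hδ, hdecay⟩ := exists_isBigO_exp_smul_of_re_neg A hspec
  exact ((entryLinearMap ℝ ℝ i j).toContinuousLinearMap).integrable_comp
    (integrableOn_Ici_exp_smul_of_isBigO hδ hdecay)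

theorem integral_exp_smul_apply (A : Matrix n n ℝ) (hA : IsUnit A)
    (hspec : ∀ μ ∈ spectrum ℂ (A.map (algebraMap ℝ ℂ)), μ.re < 0) (i j : n) :
    ∫ t in Ioi (0 : ℝ), exp (t • A) i j = (-A⁻¹) i j := by
  obtain ⟨δ, hδ, hdecay⟩ := exists_isBigO_exp_smul_of_re_neg A hspec
  have hint := (integrableOn_Ici_exp_smul_of_isBigO hδ hdecay).mono_set Ioi_subset_Ici_self
  rw [← integral_Ioi_exp_smul_of_isBigO (mul_nonsing_inv A ((isUnit_iff_isUnit_det A).1 hA))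
    hδ hdecay]
  exact ((entryLinearMap ℝ ℝ i j).toContinuousLinearMap).integral_comp_comm hint

end LinftyOp

theorem isUnit_of_forall_spectrum_map_re_neg {n : Type*} [Fintype n] [DecidableEq n]
    (A : Matrix n n ℝ) (hspec : ∀ μ ∈ spectrum ℂ (A.map (algebraMap ℝ ℂ)), μ.re < 0) :
    IsUnit A := by
  have h0 : (0 : ℂ) ∉ spectrum ℂ (A.map (algebraMap ℝ ℂ)) := fun h => by simpa using hspec 0 h
  rw [spectrum.zero_mem_iff, not_not, isUnit_iff_isUnit_det, isUnit_iff_ne_zero,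
    ← RingHom.mapMatrix_apply, ← RingHom.map_det,
    map_ne_zero_iff _ (algebraMap ℝ ℂ).injective] at h0
  exact (isUnit_iff_isUnit_det A).2 h0.isUnit

end Matrix

theorem stmt6 (n : ℕ) (A : Matrix (Fin n) (Fin n) ℝ)
    (hspec : ∀ μ : ℂ, μ ∈ spectrum ℂ (A.map (algebraMap ℝ ℂ)) → μ.re < 0) :
    IsUnit A ∧
    (∀ i j, IntegrableOn (fun τ : ℝ => (NormedSpace.exp (τ • A)) i j) (Set.Ici 0)) ∧
    (∀ i j, (∫ τ in Set.Ioi (0 : ℝ), (NormedSpace.exp (τ • A)) i j) = (-A⁻¹) i j) := by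
  have hA := A.isUnit_of_forall_spectrum_map_re_neg hspec
  exact ⟨hA, A.integrableOn_exp_smul_apply hspec, A.integral_exp_smul_apply hA hspec⟩
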